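/- arXiv:2001.04411 — 2 statements merged into one kernel-verified Lean document; each statement's English description precedes it below -/
import Mathlib

section
/- Let (W,S) be a Coxeter system with Bruhat order ≤. For all x, y, x' in W with x' ≤ x, there exists y' in W with y' ≤ y such that x'y' ≤ xy. -/
/-!
Induction on `ℓ y`. Let `s` be a left descent of `y`, so `x * y = (x * s) * (s * y)`. If `s` is a
right descent of both `x` and `x'`, then `x' * s ≤ x * s`, induction gives `y₁ ≤ s * y` with
`x' * s * y₁ ≤ x * y`, and `y' = s * y₁` works because `s * y₁ ≤ y` by the lifting property.
Otherwise `x' ≤ x * s`, and the `y'` given by induction for `s * y` works directly.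

Since `BruhatLE` asks for a subword in *every* reduced word, the substance is that one reduced
word suffices. This goes through the chain order generated by `t * w ≤ w` for left inversions `t`
of `w`, whose lifting property is proved simultaneously with its agreement with subwords, and
which is compared with `BruhatLE` via the strong exchange condition. The latter comes from Tits'
action of `W` on `W × ZMod 2`, which shows that the parity of the number of occurrences of `t`
in the left inversion sequence of a word only depends on the product of the word.
-/
section BruhatSetup

variable {B : Type*} {W : Type*} [Group W] {M : CoxeterMatrix B}

/-- Strong Bruhat order: `u ≤ v` iff every reduced word for `v` has a sublist
that is a reduced word for `u`. -/
def BruhatLE (cs : CoxeterSystem M W) (u v : W) : Prop :=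
  ∀ ω : List B, cs.IsReduced ω → cs.wordProd ω = v →
    ∃ ω' : List B, List.Sublist ω' ω ∧ cs.IsReduced ω' ∧ cs.wordProd ω' = u

/-- Strict strong Bruhat order. -/
def BruhatLT (cs : CoxeterSystem M W) (u v : W) : Prop :=
  BruhatLE cs u v ∧ u ≠ v

/-- The standard parabolic subgroup `W_L` generated by the simple reflections in `L`. -/
def parab (cs : CoxeterSystem M W) (L : Set B) : Subgroup W :=
  Subgroup.closure (cs.simple '' L)

/-- The set `W^L` of minimal length coset representatives for `W / W_L`. -/
def minReps (cs : CoxeterSystem M W) (L : Set B) : Set W :=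
  {w : W | ∀ i ∈ L, cs.length w < cs.length (w * cs.simple i)}

/-- Right weak order: `v ≤_R w` iff `ℓ(w) = ℓ(w v⁻¹) + ℓ(v)`. -/
def leR (cs : CoxeterSystem M W) (v w : W) : Prop :=
  cs.length w = cs.length (w * v⁻¹) + cs.length v

section InvolutionFlip

open scoped Classical

variable {G : Type*} [Group G] {a b : G}

noncomputable def involutionFlip (a : G) (p : G × ZMod 2) : G × ZMod 2 :=
  (a * p.1 * a⁻¹, p.2 + if p.1 = a then 1 else 0)

theorem conj_eq_iff_eq_conj_inv (g w c : G) : g * w * g⁻¹ = c ↔ w = g⁻¹ * c * g := by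
  constructor <;> rintro rfl <;> group

theorem involutionFlip_involutive (ha : a * a = 1) : Function.Involutive (involutionFlip a) := by
  have ha' : a⁻¹ = a := inv_eq_of_mul_eq_one_right ha
  rintro ⟨w, ε⟩
  have hconj : a * w * a⁻¹ = a ↔ w = a := by
    rw [conj_eq_iff_eq_conj_inv]; group
  simp only [involutionFlip, hconj, Prod.mk.injEq, add_assoc]
  refine ⟨?_, ?_⟩
  · rw [ha']
    simp only [← mul_assoc, ha, one_mul]
    rw [mul_assoc, ha, mul_one]
  split_ifs <;> simp [CharTwo.add_self_eq_zero]

theorem inv_pow_mul_mul_pow (ha : a * a = 1) (hb : b * b = 1) (m j : ℕ) :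
    ((a * b) ^ m)⁻¹ * (((a * b) ^ j)⁻¹ * b) * (a * b) ^ m = ((a * b) ^ (2 * m + j))⁻¹ * b := by
  have hb' : b * (a * b) ^ m = ((a * b) ^ m)⁻¹ * b := by
    rw [← inv_pow]
    refine (SemiconjBy.pow_right ?_ m).eq
    rw [SemiconjBy, mul_inv_rev, inv_eq_of_mul_eq_one_right ha, inv_eq_of_mul_eq_one_right hb,
      mul_assoc]
  calc _ = ((a * b) ^ m)⁻¹ * ((a * b) ^ j)⁻¹ * (b * (a * b) ^ m) := by group
    _ = _ := by rw [hb']; group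

/-- The elements `((a * b) ^ k)⁻¹ * b` are `b, bab, babab, …`. -/
theorem iterate_involutionFlip_mul (ha : a * a = 1) (hb : b * b = 1) (m : ℕ) (w : G)
    (ε : ZMod 2) :
    (involutionFlip a ∘ involutionFlip b)^[m] (w, ε) =
      ((a * b) ^ m * w * ((a * b) ^ m)⁻¹,
        ε + ∑ k ∈ Finset.range (2 * m), if w = ((a * b) ^ k)⁻¹ * b then 1 else 0) := by
  induction m with
  | zero => simp
  | succ m ih =>
    rw [Function.iterate_succ_apply', ih]
    have hb' : (a * b) ^ m * w * ((a * b) ^ m)⁻¹ = b ↔ w = ((a * b) ^ (2 * m))⁻¹ * b := by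
      have := inv_pow_mul_mul_pow ha hb m 0
      simp only [pow_zero, inv_one, one_mul, add_zero] at this
      rw [conj_eq_iff_eq_conj_inv, this]
    have ha' : b * ((a * b) ^ m * w * ((a * b) ^ m)⁻¹) * b⁻¹ = a ↔
        w = ((a * b) ^ (2 * m + 1))⁻¹ * b := by
      have := inv_pow_mul_mul_pow ha hb m 1
      rw [pow_one, mul_inv_rev, inv_eq_of_mul_eq_one_right ha] at this
      rw [conj_eq_iff_eq_conj_inv, conj_eq_iff_eq_conj_inv, ← this]
    simp only [Function.comp_apply, involutionFlip, Prod.mk.injEq, hb', ha',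
      show 2 * (m + 1) = 2 * m + 1 + 1 by ring, Finset.sum_range_succ]
    refine ⟨by simp only [pow_succ', mul_inv_rev, mul_assoc], by ring⟩

theorem iterate_involutionFlip_mul_eq_id (ha : a * a = 1) (hb : b * b = 1) {n : ℕ}
    (hn : (a * b) ^ n = 1) : (involutionFlip a ∘ involutionFlip b)^[n] = id := by
  funext ⟨w, ε⟩
  have hperiod : ∀ k, ((a * b) ^ (n + k))⁻¹ = ((a * b) ^ k)⁻¹ := fun k => by
    rw [pow_add, hn, one_mul]
  rw [iterate_involutionFlip_mul ha hb, hn, two_mul, Finset.sum_range_add]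
  simp [hperiod, CharTwo.add_self_eq_zero]

end InvolutionFlip

namespace CoxeterSystem

open scoped Classical

variable (cs : CoxeterSystem M W)

local prefix:100 "s " => cs.simple
local prefix:100 "π " => cs.wordProd
local prefix:100 "lis " => cs.leftInvSeq

theorem leftInvSeq_append (ω ω' : List B) :
    lis (ω ++ ω') = lis ω ++ (lis ω').map (MulAut.conj (π ω)) := by
  induction ω with
  | nil => simp
  | cons i ω ih =>
    simp only [List.cons_append, leftInvSeq, ih, List.map_append, List.map_map, wordProd_cons,
      map_mul, MulAut.coe_mul]

theorem leftInvSeq_eq_map_conj_rightInvSeq (ω : List B) :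
    lis ω = (cs.rightInvSeq ω).map (MulAut.conj (π ω)) := by
  induction ω with
  | nil => simp
  | cons i ω ih =>
    simp only [leftInvSeq, rightInvSeq, ih, List.map_cons, List.map_map, wordProd_cons, map_mul,
      MulAut.coe_mul, List.cons.injEq, and_true]
    simp [MulAut.conj_apply, mul_assoc]

noncomputable def simpleFlip (i : B) : Equiv.Perm (W × ZMod 2) :=
  (involutionFlip_involutive (cs.simple_mul_simple_self i)).toPerm

theorem isLiftable_simpleFlip : M.IsLiftable cs.simpleFlip := fun i i' => by
  refine DFunLike.coe_injective ?_
  rw [Equiv.Perm.coe_pow, Equiv.Perm.coe_mul, Equiv.Perm.coe_one]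
  exact iterate_involutionFlip_mul_eq_id (cs.simple_mul_simple_self i)
    (cs.simple_mul_simple_self i') (cs.simple_mul_simple_pow i i')

noncomputable def reflectionRep : W →* Equiv.Perm (W × ZMod 2) :=
  cs.lift ⟨cs.simpleFlip, cs.isLiftable_simpleFlip⟩

theorem reflectionRep_wordProd (ω : List B) (w : W) (ε : ZMod 2) :
    cs.reflectionRep (π ω) (w, ε) =
      (π ω * w * (π ω)⁻¹, ε + ((lis ω).count (π ω * w * (π ω)⁻¹) : ZMod 2)) := by
  induction ω with
  | nil => simp
  | cons i ω ih =>
    rw [wordProd_cons, map_mul, Equiv.Perm.mul_apply, ih, reflectionRep,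
      lift_apply_simple]
    set t := π ω * w * (π ω)⁻¹
    have hconj : MulAut.conj (s i) t = s i * π ω * w * (s i * π ω)⁻¹ := by
      simp only [t, MulAut.conj_apply]; group
    have hself : MulAut.conj (s i) t = s i ↔ t = s i := by
      have hfix : MulAut.conj (s i) (s i) = s i := by simp
      exact ⟨fun h => (MulAut.conj (s i)).injective (h.trans hfix.symm), fun h => h ▸ hfix⟩
    refine Prod.ext ((MulAut.conj_apply (s i) t).symm.trans hconj) ?_
    show _ + (if t = s i then 1 else 0) = _
    rw [← hconj, leftInvSeq, List.count_cons,
      List.count_map_of_injective _ _ (MulAut.conj (s i)).injective]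
    simp only [beq_iff_eq, eq_comm (a := s i), hself]
    push_cast
    ring

theorem count_leftInvSeq_eq_of_wordProd_eq {ω ω' : List B} (h : π ω = π ω') (t : W) :
    ((lis ω).count t : ZMod 2) = (lis ω').count t := by
  have key : ∀ ν : List B,
      cs.reflectionRep (π ν) ((π ν)⁻¹ * t * π ν, 0) = (t, ((lis ν).count t : ZMod 2)) := by
    intro ν
    rw [reflectionRep_wordProd, zero_add, show π ν * ((π ν)⁻¹ * t * π ν) * (π ν)⁻¹ = t by group]
  have := key ω'
  rw [← h] at this
  exact congrArg Prod.snd ((key ω).symm.trans this)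

theorem count_leftInvSeq_palindrome (υ : List B) (i : B) :
    ((lis (υ ++ i :: υ.reverse)).count (π υ * s i * (π υ)⁻¹) : ZMod 2) = 1 := by
  have hfix : ∀ l : List W, (l.map (MulAut.conj (s i))).count (s i) = l.count (s i) := fun l => by
    nth_rw 1 [← show MulAut.conj (s i) (s i) = s i by simp]
    exact List.count_map_of_injective _ _ (MulAut.conj (s i)).injective _
  rw [← MulAut.conj_apply, leftInvSeq_append, leftInvSeq, leftInvSeq_reverse,
    leftInvSeq_eq_map_conj_rightInvSeq, List.count_append]
  simp only [List.count_map_of_injective _ _ (MulAut.conj (π υ)).injective]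
  rw [List.count_cons_self, hfix, List.count_reverse, ← add_assoc, ← two_mul]
  push_cast
  rw [show (2 : ZMod 2) = 0 from rfl, zero_mul, zero_add]

theorem mem_leftInvSeq_of_isLeftInversion {ω : List B} {t : W}
    (ht : cs.IsLeftInversion (π ω) t) : t ∈ lis ω := by
  -- `ω` has the same product as `τ ++ ν` with `τ = υ ++ i :: υ.reverse` a palindrome for `t`, in
  -- which `t` occurs an odd number of times, and `ν` reduced for `t * π ω`, which is shorter than
  -- `t * (t * π ω)`, so that `t` does not occur in the part of `lis (τ ++ ν)` coming from `ν`.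
  obtain ⟨⟨u, i, rfl⟩, hlt⟩ := ht
  obtain ⟨υ, rfl⟩ := cs.wordProd_surjective u
  set t := π υ * s i * (π υ)⁻¹
  have ht : cs.IsReflection t := ⟨π υ, i, rfl⟩
  obtain ⟨ν, hν, hνω⟩ := cs.exists_isReduced (t * π ω)
  have hτ : π (υ ++ i :: υ.reverse) = t := by
    rw [wordProd_append, wordProd_cons, wordProd_reverse, ← mul_assoc]
  have hprod : π (υ ++ i :: υ.reverse ++ ν) = π ω := by
    rw [wordProd_append, hτ, ← hνω, ← mul_assoc, ht.mul_self, one_mul]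
  have hν₀ : ((lis ν).map (MulAut.conj t)).count t = 0 := by
    nth_rw 1 [← show MulAut.conj t t = t by simp]
    rw [List.count_map_of_injective _ _ (MulAut.conj t).injective]
    refine List.count_eq_zero.mpr fun hmem => ?_
    have := (cs.isLeftInversion_of_mem_leftInvSeq hν hmem).2
    rw [← hνω, ← mul_assoc, ht.mul_self, one_mul] at this
    exact absurd hlt this.not_gt
  have hcount := cs.count_leftInvSeq_eq_of_wordProd_eq hprod t
  rw [leftInvSeq_append, List.count_append, hτ, hν₀, add_zero, count_leftInvSeq_palindrome]
    at hcount
  refine List.count_pos_iff.mp (Nat.pos_of_ne_zero fun h0 => ?_)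
  rw [h0, Nat.cast_zero] at hcount
  exact one_ne_zero hcount

theorem exists_eraseIdx_eq_mul_of_isLeftInversion {ω : List B} {t : W}
    (ht : cs.IsLeftInversion (π ω) t) : ∃ j < ω.length, π (ω.eraseIdx j) = t * π ω := by
  obtain ⟨j, hj, rfl⟩ := List.getElem_of_mem (cs.mem_leftInvSeq_of_isLeftInversion ht)
  refine ⟨j, by simpa using hj, ?_⟩
  rw [← getD_leftInvSeq_mul_wordProd, List.getD_eq_getElem]

theorem isLeftDescent_simple_mul_iff {i : B} {w : W} :
    cs.IsLeftDescent (s i * w) i ↔ ¬cs.IsLeftDescent w i := by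
  rw [isLeftDescent_iff_not_isLeftDescent_mul, simple_mul_simple_cancel_left]

theorem isReduced_cons_iff {i : B} {ω : List B} :
    cs.IsReduced (i :: ω) ↔ cs.IsReduced ω ∧ ¬cs.IsLeftDescent (π ω) i := by
  refine ⟨fun h => ?_, fun ⟨hω, hi⟩ => ?_⟩
  · have hω : cs.IsReduced ω := by simpa using h.drop 1
    refine ⟨hω, ?_⟩
    rw [not_isLeftDescent_iff, ← wordProd_cons, h.eq, hω.eq, List.length_cons]
  · rw [not_isLeftDescent_iff, hω.eq, ← wordProd_cons] at hi
    rw [IsReduced, hi, List.length_cons]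

theorem exists_isReduced_sublist (ω : List B) :
    ∃ ρ, ρ.Sublist ω ∧ cs.IsReduced ρ ∧ π ρ = π ω := by
  induction ω with
  | nil => exact ⟨[], List.Sublist.slnil, by simp [IsReduced], rfl⟩
  | cons i ω ih =>
    obtain ⟨ρ, hρ, hρred, hρω⟩ := ih
    rw [wordProd_cons, ← hρω]
    by_cases hi : cs.IsLeftDescent (π ρ) i
    · obtain ⟨j, hj, hjρ⟩ := cs.exists_eraseIdx_eq_mul_of_isLeftInversion
        ((cs.isLeftInversion_simple_iff_isLeftDescent _ i).mpr hi)
      refine ⟨ρ.eraseIdx j, (List.eraseIdx_sublist ρ j).trans (hρ.trans (.cons i (.refl ω))), ?_,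
        hjρ⟩
      rw [IsReduced, hjρ, List.length_eraseIdx_of_lt hj, ← hρred.eq]
      rw [isLeftDescent_iff] at hi
      omega
    · exact ⟨i :: ρ, hρ.cons_cons i, cs.isReduced_cons_iff.mpr ⟨hρred, hi⟩, wordProd_cons _ _ _⟩

end CoxeterSystem

namespace BruhatLE

variable {cs : CoxeterSystem M W} {u v w : W}

local prefix:100 "s " => cs.simple
local prefix:100 "π " => cs.wordProd

protected theorem refl (cs : CoxeterSystem M W) (w : W) : BruhatLE cs w w :=
  fun ω hω hωw => ⟨ω, List.Sublist.refl ω, hω, hωw⟩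

protected theorem trans (huv : BruhatLE cs u v) (hvw : BruhatLE cs v w) : BruhatLE cs u w := by
  intro ω hω hωw
  obtain ⟨σ, hσ, hσred, hσv⟩ := hvw ω hω hωw
  obtain ⟨ρ, hρ, hρred, hρu⟩ := huv σ hσred hσv
  exact ⟨ρ, hρ.trans hσ, hρred, hρu⟩

protected theorem inv (h : BruhatLE cs u w) : BruhatLE cs u⁻¹ w⁻¹ := by
  intro ω hω hωw
  obtain ⟨σ, hσ, hσred, hσu⟩ := h ω.reverse hω.reverse (by rw [cs.wordProd_reverse, hωw, inv_inv])
  refine ⟨σ.reverse, List.reverse_reverse ω ▸ hσ.reverse, hσred.reverse, ?_⟩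
  rw [cs.wordProd_reverse, hσu]

theorem of_isLeftInversion {t : W} (ht : cs.IsLeftInversion w t) : BruhatLE cs (t * w) w := by
  rintro ω - rfl
  obtain ⟨j, -, hj⟩ := cs.exists_eraseIdx_eq_mul_of_isLeftInversion ht
  obtain ⟨ρ, hρ, hρred, hρj⟩ := cs.exists_isReduced_sublist (ω.eraseIdx j)
  exact ⟨ρ, hρ.trans (List.eraseIdx_sublist ω j), hρred, hρj.trans hj⟩

theorem simple_mul_of_isLeftDescent {i : B} (hw : cs.IsLeftDescent w i) :
    BruhatLE cs (s i * w) w :=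
  of_isLeftInversion ((cs.isLeftInversion_simple_iff_isLeftDescent w i).mpr hw)

theorem mul_simple_of_not_isRightDescent {i : B} (hw : ¬cs.IsRightDescent w i) :
    BruhatLE cs w (w * s i) := by
  have hconj : w * s i * w⁻¹ * (w * s i) = w := by
    rw [show w * s i * w⁻¹ * (w * s i) = w * (s i * s i) by group, cs.simple_mul_simple_self,
      mul_one]
  have ht : cs.IsLeftInversion (w * s i) (w * s i * w⁻¹) := by
    refine ⟨(cs.isReflection_simple i).conj w, ?_⟩
    rw [hconj, cs.not_isRightDescent_iff.mp hw]
    exact Nat.lt_succ_self _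
  have := of_isLeftInversion ht
  rwa [hconj] at this

theorem exists_sublist_cons_of_isLeftDescent {i : B} (h : BruhatLE cs u w)
    (hw : cs.IsLeftDescent w i) {ν : List B} (hν : cs.IsReduced ν) (hνw : π ν = s i * w) :
    ∃ σ, σ.Sublist (i :: ν) ∧ cs.IsReduced σ ∧ π σ = u := by
  refine h (i :: ν) (cs.isReduced_cons_iff.mpr ⟨hν, ?_⟩) ?_
  · rwa [hνw, cs.isLeftDescent_simple_mul_iff, not_not]
  · rw [cs.wordProd_cons, hνw, cs.simple_mul_simple_cancel_left]

theorem simple_mul_simple_mul_of_isLeftDescent {i : B} (h : BruhatLE cs u w)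
    (hu : cs.IsLeftDescent u i) (hw : cs.IsLeftDescent w i) :
    BruhatLE cs (s i * u) (s i * w) := by
  intro ν hν hνw
  obtain ⟨σ, hσ, hσred, rfl⟩ := h.exists_sublist_cons_of_isLeftDescent hw hν hνw
  rcases List.sublist_cons_iff.mp hσ with hσν | ⟨σ₁, rfl, hσ₁⟩
  · obtain ⟨ρ, hρ, hρred, hρu⟩ := simple_mul_of_isLeftDescent hu σ hσred rfl
    exact ⟨ρ, hρ.trans hσν, hρred, hρu⟩
  · refine ⟨σ₁, hσ₁, (cs.isReduced_cons_iff.mp hσred).1, ?_⟩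
    rw [cs.wordProd_cons, cs.simple_mul_simple_cancel_left]

theorem le_simple_mul_of_isLeftDescent {i : B} (h : BruhatLE cs u w)
    (hu : ¬cs.IsLeftDescent u i) (hw : cs.IsLeftDescent w i) : BruhatLE cs u (s i * w) := by
  intro ν hν hνw
  obtain ⟨σ, hσ, hσred, rfl⟩ := h.exists_sublist_cons_of_isLeftDescent hw hν hνw
  rcases List.sublist_cons_iff.mp hσ with hσν | ⟨σ₁, rfl, -⟩
  · exact ⟨σ, hσν, hσred, rfl⟩
  · rw [cs.wordProd_cons, cs.isLeftDescent_simple_mul_iff] at hu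
    exact (hu (cs.isReduced_cons_iff.mp hσred).2).elim

theorem mul_simple_mul_simple_of_isRightDescent {i : B} (h : BruhatLE cs u w)
    (hu : cs.IsRightDescent u i) (hw : cs.IsRightDescent w i) :
    BruhatLE cs (u * s i) (w * s i) := by
  simpa only [mul_inv_rev, inv_inv, cs.inv_simple] using
    (h.inv.simple_mul_simple_mul_of_isLeftDescent (cs.isLeftDescent_inv_iff.mpr hu)
      (cs.isLeftDescent_inv_iff.mpr hw)).inv

theorem le_mul_simple_of_isRightDescent {i : B} (h : BruhatLE cs u w)
    (hu : ¬cs.IsRightDescent u i) (hw : cs.IsRightDescent w i) : BruhatLE cs u (w * s i) := by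
  simpa only [mul_inv_rev, inv_inv, cs.inv_simple] using (h.inv.le_simple_mul_of_isLeftDescent
    (cs.isLeftDescent_inv_iff.not.mpr hu) (cs.isLeftDescent_inv_iff.mpr hw)).inv

end BruhatLE

namespace CoxeterSystem

variable (cs : CoxeterSystem M W)

local prefix:100 "s " => cs.simple
local prefix:100 "π " => cs.wordProd
local prefix:100 "ℓ " => cs.length

/-- The Bruhat order in its usual definition by chains of reflections. -/
def ReflectionChain : W → W → Prop :=
  Relation.ReflTransGen fun v w => ∃ t, cs.IsLeftInversion w t ∧ v = t * w

variable {cs}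

theorem reflectionChain_of_isLeftInversion {t w : W} (ht : cs.IsLeftInversion w t) :
    cs.ReflectionChain (t * w) w :=
  .single ⟨t, ht, rfl⟩

theorem reflectionChain_simple_mul {i : B} {w : W} (hw : ¬cs.IsLeftDescent w i) :
    cs.ReflectionChain w (s i * w) := by
  have := reflectionChain_of_isLeftInversion
    ((cs.isLeftInversion_simple_iff_isLeftDescent _ i).mpr (cs.isLeftDescent_simple_mul_iff.mpr hw))
  rwa [cs.simple_mul_simple_cancel_left] at this

theorem ReflectionChain.bruhatLE {u w : W} (h : cs.ReflectionChain u w) : BruhatLE cs u w := by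
  induction h with
  | refl => exact .refl cs u
  | tail _ hstep ih =>
    obtain ⟨t, ht, rfl⟩ := hstep
    exact ih.trans (.of_isLeftInversion ht)

theorem reflectionChain_cons_of_sublist {i : B} {ω σ : List B} (hω : cs.IsReduced (i :: ω))
    (hsub : ∀ σ, σ.Sublist ω → cs.IsReduced σ → cs.ReflectionChain (π σ) (π ω))
    (hlift : ∀ u, cs.ReflectionChain u (π ω) → ¬cs.IsLeftDescent u i →
      cs.ReflectionChain (s i * u) (s i * π ω))
    (hσ : σ.Sublist (i :: ω)) (hσred : cs.IsReduced σ) :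
    cs.ReflectionChain (π σ) (π (i :: ω)) := by
  obtain ⟨hωred, hωi⟩ := cs.isReduced_cons_iff.mp hω
  rw [wordProd_cons]
  rcases List.sublist_cons_iff.mp hσ with hσω | ⟨σ, rfl, hσω⟩
  · exact (hsub σ hσω hσred).trans (reflectionChain_simple_mul hωi)
  · obtain ⟨hσ', hσi⟩ := cs.isReduced_cons_iff.mp hσred
    rw [wordProd_cons]
    exact hlift _ (hsub σ hσω hσ') hσi

theorem ReflectionChain.simple_mul_simple_mul_of_lt {u w : W} {i : B}
    (h : cs.ReflectionChain u w) (hu : ¬cs.IsLeftDescent u i) (hw : ¬cs.IsLeftDescent w i)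
    (hsub : ∀ ω σ : List B, ω.length < ℓ w → cs.IsReduced ω → σ.Sublist ω → cs.IsReduced σ →
      cs.ReflectionChain (π σ) (π ω))
    (hlift : ∀ u' w', ℓ w' < ℓ w → cs.ReflectionChain u' w' → ¬cs.IsLeftDescent u' i →
      ¬cs.IsLeftDescent w' i → cs.ReflectionChain (s i * u') (s i * w')) :
    cs.ReflectionChain (s i * u) (s i * w) := by
  rcases h.cases_tail with rfl | ⟨v, huv, t, ht, rfl⟩
  · exact .refl
  have hvw : ℓ (t * w) < ℓ w := ht.2
  by_cases hv : cs.IsLeftDescent (t * w) i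
  · obtain ⟨ν, hν, hνv⟩ := cs.exists_isReduced (s i * (t * w))
    obtain ⟨σ, hσ, hσred, rfl⟩ :=
      (ReflectionChain.bruhatLE huv).le_simple_mul_of_isLeftDescent hu hv ν hν hνv.symm
    have hlen : ℓ (s i * (t * w)) < ℓ w := lt_trans hv hvw
    have := hlift _ _ hlen (hνv ▸ hsub ν σ (by rw [← hν.eq, ← hνv]; exact hlen) hν hσ hσred) hu
      (cs.isLeftDescent_simple_mul_iff.not.mpr (not_not.mpr hv))
    rw [cs.simple_mul_simple_cancel_left] at this
    exact (this.trans (reflectionChain_of_isLeftInversion ht)).trans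
      (reflectionChain_simple_mul hw)
  · refine (hlift u _ hvw huv hu hv).trans ?_
    have hconj : s i * t * (s i)⁻¹ * (s i * w) = s i * (t * w) := by group
    have ht' : cs.IsLeftInversion (s i * w) (s i * t * (s i)⁻¹) := by
      refine ⟨ht.1.conj (s i), ?_⟩
      rw [hconj, cs.not_isLeftDescent_iff.mp hv, cs.not_isLeftDescent_iff.mp hw]
      omega
    exact hconj ▸ reflectionChain_of_isLeftInversion ht'

theorem reflectionChain_of_sublist_and_simple_mul (n : ℕ) :
    (∀ ω σ : List B, ω.length = n → cs.IsReduced ω → σ.Sublist ω → cs.IsReduced σ →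
        cs.ReflectionChain (π σ) (π ω)) ∧
    (∀ (u w : W) (i : B), ℓ w = n → cs.ReflectionChain u w → ¬cs.IsLeftDescent u i →
        ¬cs.IsLeftDescent w i → cs.ReflectionChain (s i * u) (s i * w)) := by
  induction n using Nat.strong_induction_on with
  | _ n ih =>
  refine ⟨fun ω σ hn hω hσ hσred => ?_, fun u w i hn h hu hw => ?_⟩
  · cases ω with
    | nil => rw [List.sublist_nil.mp hσ]; exact .refl
    | cons i ω =>
      obtain ⟨hωred, hωi⟩ := cs.isReduced_cons_iff.mp hω
      obtain ⟨hsub, hlift⟩ := ih ω.length (by simp [← hn])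
      exact reflectionChain_cons_of_sublist hω (hsub ω · rfl hωred)
        (fun u h hu => hlift u _ i hωred.eq h hu hωi) hσ hσred
  · exact h.simple_mul_simple_mul_of_lt hu hw (fun ω σ hlt => (ih _ (hn ▸ hlt)).1 ω σ rfl)
      (fun u' w' hlt => (ih _ (hn ▸ hlt)).2 u' w' i rfl)

theorem bruhatLE_wordProd_of_sublist {ω σ : List B} (hω : cs.IsReduced ω) (hσ : σ.Sublist ω) :
    BruhatLE cs (π σ) (π ω) := by
  obtain ⟨ρ, hρ, hρred, hρσ⟩ := cs.exists_isReduced_sublist σ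
  rw [← hρσ]
  exact ReflectionChain.bruhatLE
    ((reflectionChain_of_sublist_and_simple_mul ω.length).1 ω ρ rfl hω (hρ.trans hσ) hρred)

end CoxeterSystem

namespace BruhatLE

variable {cs : CoxeterSystem M W} {u w : W}

local prefix:100 "s " => cs.simple

theorem simple_mul_simple_mul_of_not_isLeftDescent {i : B} (h : BruhatLE cs u w)
    (hu : ¬cs.IsLeftDescent u i) (hw : ¬cs.IsLeftDescent w i) :
    BruhatLE cs (s i * u) (s i * w) := by
  obtain ⟨ω, hω, rfl⟩ := cs.exists_isReduced w
  obtain ⟨σ, hσ, -, rfl⟩ := h ω hω rfl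
  simpa only [cs.wordProd_cons] using
    CoxeterSystem.bruhatLE_wordProd_of_sublist (cs.isReduced_cons_iff.mpr ⟨hω, hw⟩)
      (hσ.cons_cons i)

theorem simple_mul_of_le_simple_mul {i : B} (h : BruhatLE cs u (s i * w))
    (hw : cs.IsLeftDescent w i) : BruhatLE cs (s i * u) w := by
  by_cases hu : cs.IsLeftDescent u i
  · exact (simple_mul_of_isLeftDescent hu).trans (h.trans (simple_mul_of_isLeftDescent hw))
  · simpa only [cs.simple_mul_simple_cancel_left] using
      h.simple_mul_simple_mul_of_not_isLeftDescent hu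
        (cs.isLeftDescent_simple_mul_iff.not.mpr (not_not.mpr hw))

end BruhatLE

theorem exists_bruhatLE_mul_of_isLeftDescent {cs : CoxeterSystem M W} {x y x' : W} {i : B}
    (hy : cs.IsLeftDescent y i) (h : BruhatLE cs x' x)
    (ih : ∀ x x', BruhatLE cs x' x →
      ∃ y', BruhatLE cs y' (cs.simple i * y) ∧ BruhatLE cs (x' * y') (x * (cs.simple i * y))) :
    ∃ y', BruhatLE cs y' y ∧ BruhatLE cs (x' * y') (x * y) := by
  have hxy : x * y = x * cs.simple i * (cs.simple i * y) := by
    rw [mul_assoc, cs.simple_mul_simple_cancel_left]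
  by_cases hx : cs.IsRightDescent x i ∧ cs.IsRightDescent x' i
  · obtain ⟨y', hy', hxy'⟩ := ih _ _ (h.mul_simple_mul_simple_of_isRightDescent hx.2 hx.1)
    refine ⟨cs.simple i * y', hy'.simple_mul_of_le_simple_mul hy, ?_⟩
    rwa [hxy, ← mul_assoc]
  · have hx' : BruhatLE cs x' (x * cs.simple i) := by
      by_cases hxi : cs.IsRightDescent x i
      · exact h.le_mul_simple_of_isRightDescent (fun hx'i => hx ⟨hxi, hx'i⟩) hxi
      · exact h.trans (BruhatLE.mul_simple_of_not_isRightDescent hxi)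
    obtain ⟨y', hy', hxy'⟩ := ih _ _ hx'
    exact ⟨y', hy'.trans (BruhatLE.simple_mul_of_isLeftDescent hy), hxy ▸ hxy'⟩

theorem statement_0 (cs : CoxeterSystem M W) (x y x' : W) (h : BruhatLE cs x' x) :
    ∃ y' : W, BruhatLE cs y' y ∧ BruhatLE cs (x' * y') (x * y) := by
  induction hn : cs.length y using Nat.strong_induction_on generalizing x y x' with
  | _ n ih =>
  obtain rfl | hy := eq_or_ne y 1
  · exact ⟨1, .refl cs 1, by simpa using h⟩
  obtain ⟨i, hi⟩ := cs.exists_leftDescent_of_ne_one hy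
  exact exists_bruhatLE_mul_of_isLeftDescent hi h fun x x' h' => ih _ (hn ▸ hi) x _ x' h' rfl

end BruhatSetup
end

section
/- With the setup of ≤_O: let w ∈ W(I,J,K) be written as w = w₁w₂ with w₁ ∈ W^{I∪J∪K} and w₂ ∈ W_I. Then the set Min(w) of minimal-length elements of the coset w W_K W_{I,J} equals {w x x* : x ∈ W_I, ℓ(w₂ x) + ℓ(x⁻¹) = ℓ(w₂)}. -/
section BruhatSetup

variable {B : Type*} {W : Type*} [Group W] {M : CoxeterMatrix B}

/-- The setup of the order `≤_O`: `I`, `J`, `K` are pairwise disjoint and pairwise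
disconnected subsets of the simple system (so that `W_{I∪J∪K} = W_I × W_J × W_K`),
and `σ : x ↦ x*` restricts to an isomorphism of Coxeter groups `W_I → W_J`
(a bijective group homomorphism sending simple reflections to simple reflections). -/
structure GoodSetup (cs : CoxeterSystem M W) (I J K : Set B) (σ : W → W) : Prop where
  disjIJ : Disjoint I J
  disjIK : Disjoint I K
  disjJK : Disjoint J K
  commIJ : ∀ i ∈ I, ∀ j ∈ J, Commute (cs.simple i) (cs.simple j)
  commIK : ∀ i ∈ I, ∀ k ∈ K, Commute (cs.simple i) (cs.simple k)
  commJK : ∀ j ∈ J, ∀ k ∈ K, Commute (cs.simple j) (cs.simple k)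
  directProd : ∀ x ∈ parab cs I, ∀ y ∈ parab cs J, ∀ z ∈ parab cs K,
    x * y * z = 1 → x = 1 ∧ y = 1 ∧ z = 1
  mulSigma : ∀ x ∈ parab cs I, ∀ y ∈ parab cs I, σ (x * y) = σ x * σ y
  bijSigma : Set.BijOn σ (parab cs I : Set W) (parab cs J : Set W)
  simpleSigma : ∀ i ∈ I, ∃ j ∈ J, σ (cs.simple i) = cs.simple j

/-- Membership in the coset `[w] = w · W_K · W_{I,J}` where `W_{I,J} = {x x* : x ∈ W_I}`. -/
def inCoset (cs : CoxeterSystem M W) (I K : Set B) (σ : W → W) (w u : W) : Prop :=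
  ∃ a ∈ parab cs K, ∃ x ∈ parab cs I, u = w * a * (x * σ x)

/-- The relation `≤_O`: `w' ≤_O w` iff some `u ∈ [w']` satisfies `u ≤ w` in Bruhat order. -/
def leO (cs : CoxeterSystem M W) (I K : Set B) (σ : W → W) (w' w : W) : Prop :=
  ∃ u, inCoset cs I K σ w' u ∧ BruhatLE cs u w

/-- The strict relation associated to `≤_O`. -/
def ltO (cs : CoxeterSystem M W) (I K : Set B) (σ : W → W) (w' w : W) : Prop :=
  leO cs I K σ w' w ∧ w' ≠ w

/-- `Min(w)`: the elements of the coset `[w]` of length `ℓ(w)`. -/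
def MinC (cs : CoxeterSystem M W) (I K : Set B) (σ : W → W) (w : W) : Set W :=
  {u : W | inCoset cs I K σ w u ∧ cs.length u = cs.length w}

/-- The set `M` of all elements having minimal length in their coset mod `W_K W_{I,J}`. -/
def Mset (cs : CoxeterSystem M W) (I J K : Set B) (σ : W → W) : Set W :=
  {u : W | ∃ w ∈ minReps cs (J ∪ K), u ∈ MinC cs I K σ w}

/-!
Write `w = w₁ w₂` with `w₁ ∈ W^{I∪J∪K}`. Because `I`, `J`, `K` are pairwise disconnected, every
element of `W_I W_J W_K` has length `ℓ x + ℓ y + ℓ z` when written as `x y z`, and `w₁` adds its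
length to everything in `W_{I∪J∪K}`. Since `W_K` commutes with `x x*`, the element `w a x x*` of the
coset equals `w₁ · (w₂ x) · x* · a`, of length `ℓ w₁ + ℓ (w₂ x) + ℓ x + ℓ a` (as `ℓ x* = ℓ x`),
while `ℓ w = ℓ w₁ + ℓ w₂ ≤ ℓ w₁ + ℓ (w₂ x) + ℓ x⁻¹`. So it has length `ℓ w` exactly when `a = 1`
and `ℓ (w₂ x) + ℓ x⁻¹ = ℓ w₂`.

The additivity `ℓ (u v) = ℓ u + ℓ v` for `u ∈ W^L`, `v ∈ W_L` comes from the exchange condition,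
which follows from Tits' action of `W` on `W × ZMod 2`: `s i` sends `(t, e)` to
`(s i t s i, e + [t = s i])`, and the parity of the number of occurrences of `t` in the right
inversion sequence of a word only depends on the element the word represents.
-/

namespace CoxeterSystem

open List

variable (cs : CoxeterSystem M W)

local prefix:100 "s " => cs.simple
local prefix:100 "π " => cs.wordProd
local prefix:100 "ℓ " => cs.length
local prefix:100 "ris " => cs.rightInvSeq

section Exchange

open Classical

lemma conj_eq_iff_eq_conj {p t x : W} : p * t * p⁻¹ = x ↔ t = p⁻¹ * x * p := by
  constructor <;> rintro rfl <;> group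

noncomputable def signedConj (i : B) (p : W × ZMod 2) : W × ZMod 2 :=
  (s i * p.1 * s i, p.2 + if p.1 = s i then 1 else 0)

lemma simple_mul_mul_simple_eq_iff {i : B} {t x : W} : s i * t * s i = x ↔ t = s i * x * s i := by
  constructor <;> rintro rfl <;> simp [mul_assoc]

lemma signedConj_involutive (i : B) : Function.Involutive (cs.signedConj i) := by
  rintro ⟨t, e⟩
  have hfix : s i * t * s i = s i ↔ t = s i := by
    rw [simple_mul_mul_simple_eq_iff, simple_mul_simple_self, one_mul]
  refine Prod.ext (by simp [signedConj, mul_assoc]) ?_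
  show e + (if t = s i then 1 else 0) + (if s i * t * s i = s i then 1 else 0) = e
  rw [if_congr hfix rfl rfl, add_assoc, CharTwo.add_self_eq_zero, add_zero]

noncomputable def signedConjPerm (i : B) : Equiv.Perm (W × ZMod 2) :=
  (cs.signedConj_involutive i).toPerm

lemma signedConjPerm_apply (i : B) (p : W × ZMod 2) :
    cs.signedConjPerm i p = (s i * p.1 * s i, p.2 + if p.1 = s i then 1 else 0) := rfl

lemma signedConjPerm_mul_pow_apply (i j : B) (m : ℕ) (t : W) (e : ZMod 2) :
    ((cs.signedConjPerm i * cs.signedConjPerm j) ^ m) (t, e) =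
      ((s i * s j) ^ m * t * ((s i * s j) ^ m)⁻¹,
        e + ∑ n ∈ Finset.range (2 * m), if t = (s j * s i) ^ n * s j then 1 else 0) := by
  have hinv : (s i * s j)⁻¹ = s j * s i := by simp
  induction m generalizing t e with
  | zero => simp
  | succ m ih =>
    have hconj : ∀ n : ℕ, s i * s j * t * (s i * s j)⁻¹ = (s j * s i) ^ n * s j ↔
        t = (s j * s i) ^ (n + 2) * s j := by
      intro n
      rw [conj_eq_iff_eq_conj, hinv, pow_succ, pow_succ']
      simp only [mul_assoc]
    have hstep : (cs.signedConjPerm i * cs.signedConjPerm j) (t, e) =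
        (s i * s j * t * (s i * s j)⁻¹, e + ((if t = (s j * s i) ^ 0 * s j then 1 else 0)
          + (if t = (s j * s i) ^ 1 * s j then 1 else 0))) := by
      simp only [Equiv.Perm.mul_apply, signedConjPerm_apply, pow_zero, one_mul, pow_one,
        simple_mul_mul_simple_eq_iff, hinv, add_assoc]
      simp only [mul_assoc]
    rw [pow_succ, Equiv.Perm.mul_apply, hstep, ih]
    refine Prod.ext (by simp [pow_succ, mul_assoc]) ?_
    simp only [hconj, show 2 * (m + 1) = 2 * m + 1 + 1 by ring, Finset.sum_range_succ']
    ring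

lemma signedConjPerm_isLiftable : M.IsLiftable cs.signedConjPerm := by
  intro i j
  ext ⟨t, e⟩ <;>
  · rw [Equiv.Perm.one_apply, signedConjPerm_mul_pow_apply, simple_mul_simple_pow]
    have hperiodic : ∀ n, (s j * s i) ^ (M i j + n) = (s j * s i) ^ n := by
      intro n
      rw [pow_add, simple_mul_simple_pow', one_mul]
    simp only [two_mul, Finset.sum_range_add, hperiodic, CharTwo.add_self_eq_zero]
    simp

noncomputable def titsRep : W →* Equiv.Perm (W × ZMod 2) :=
  cs.lift ⟨cs.signedConjPerm, cs.signedConjPerm_isLiftable⟩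

lemma titsRep_wordProd (ω : List B) (t : W) (e : ZMod 2) :
    cs.titsRep (π ω) (t, e) = (π ω * t * (π ω)⁻¹, e + ((ris ω).count t : ZMod 2)) := by
  induction ω generalizing t e with
  | nil => simp [titsRep]
  | cons i ω ih =>
    have hfix : π ω * t * (π ω)⁻¹ = s i ↔ (π ω)⁻¹ * s i * π ω = t := by
      rw [conj_eq_iff_eq_conj, eq_comm]
    rw [wordProd_cons, map_mul, Equiv.Perm.mul_apply, ih, titsRep, lift_apply_simple,
      signedConjPerm_apply, rightInvSeq, count_cons, if_congr hfix rfl rfl]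
    refine Prod.ext (by simp [mul_assoc]) ?_
    simp [add_assoc]

theorem count_rightInvSeq_eq_of_wordProd_eq {ω ω' : List B} (h : π ω = π ω') (t : W) :
    ((ris ω).count t : ZMod 2) = (ris ω').count t := by
  simpa [titsRep_wordProd] using congrArg (fun w => (cs.titsRep w (t, 0)).2) h

/-- The exchange condition. -/
theorem simple_mem_rightInvSeq {ω : List B} {i : B} (h : ℓ (π ω * s i) < ℓ (π ω)) :
    s i ∈ ris ω := by
  obtain ⟨ω', hred, hω'⟩ := cs.exists_isReduced (π ω * s i)
  have hnot : s i ∉ ris ω' := fun hmem => by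
    have := (cs.isRightInversion_of_mem_rightInvSeq hred hmem).2
    rw [← hω', simple_mul_simple_cancel_right] at this
    omega
  have hcount : (ris (ω'.concat i)).count (s i) = 1 := by
    rw [rightInvSeq_concat, count_concat_self, count_eq_zero.mpr]
    simp only [mem_map, MulAut.conj_apply, simple_mul_mul_simple_eq_iff, inv_simple,
      simple_mul_simple_cancel_right, not_exists, not_and]
    exact fun x hx hx1 => hnot (hx1 ▸ hx)
  have hprod : π ω = π (ω'.concat i) := by
    rw [concat_eq_append, wordProd_append, wordProd_singleton, ← hω',
      simple_mul_simple_cancel_right]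
  by_contra hmem
  have := cs.count_rightInvSeq_eq_of_wordProd_eq hprod (s i)
  rw [count_eq_zero.mpr hmem, hcount] at this
  exact zero_ne_one this

end Exchange

theorem exists_wordProd_eraseIdx_eq_mul_simple {ω : List B} {i : B}
    (h : ℓ (π ω * s i) < ℓ (π ω)) : ∃ j < ω.length, π (ω.eraseIdx j) = π ω * s i := by
  obtain ⟨j, hj, hget⟩ := List.mem_iff_getElem.mp (cs.simple_mem_rightInvSeq h)
  rw [length_rightInvSeq] at hj
  refine ⟨j, hj, ?_⟩
  rw [← wordProd_mul_getD_rightInvSeq, getD_eq_getElem _ _ (by simpa using hj), hget]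

theorem rightInvSeq_append (ω ω' : List B) :
    ris (ω ++ ω') = (ris ω).map (MulAut.conj (π ω')⁻¹) ++ ris ω' := by
  induction ω with
  | nil => simp
  | cons i ω ih =>
    rw [cons_append, rightInvSeq, ih, rightInvSeq, map_cons, cons_append, wordProd_append]
    simp only [MulAut.conj_apply, mul_inv_rev, inv_inv, mul_assoc]

variable {cs}

theorem parab_mono {L L' : Set B} (h : L ⊆ L') : parab cs L ≤ parab cs L' :=
  Subgroup.closure_mono (Set.image_mono h)

theorem simple_mem_parab {L : Set B} {i : B} (hi : i ∈ L) : s i ∈ parab cs L :=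
  Subgroup.subset_closure ⟨i, hi, rfl⟩

theorem wordProd_mem_parab {L : Set B} {ω : List B} (hω : ∀ b ∈ ω, b ∈ L) :
    π ω ∈ parab cs L :=
  (parab cs L).list_prod_mem (by simpa using fun b hb => simple_mem_parab (hω b hb))

theorem exists_reduced_word_of_mem_parab {L : Set B} {u : W} (hu : u ∈ parab cs L) :
    ∃ ω : List B, (∀ b ∈ ω, b ∈ L) ∧ cs.IsReduced ω ∧ π ω = u := by
  have extend : ∀ x, ∀ l ∈ L, (∃ ω : List B, (∀ b ∈ ω, b ∈ L) ∧ cs.IsReduced ω ∧ π ω = x) →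
      ∃ ω : List B, (∀ b ∈ ω, b ∈ L) ∧ cs.IsReduced ω ∧ π ω = x * s l := by
    rintro _ l hl ⟨ω, hωL, hω, rfl⟩
    rcases cs.length_mul_simple (π ω) l with hlong | hshort
    · refine ⟨ω ++ [l], ?_, ?_, by rw [wordProd_append, wordProd_singleton]⟩
      · simpa [or_imp, forall_and] using ⟨hωL, hl⟩
      · rw [IsReduced, wordProd_append, wordProd_singleton, hlong, hω, length_append,
          length_singleton]
    · obtain ⟨j, hj, hdel⟩ := cs.exists_wordProd_eraseIdx_eq_mul_simple (ω := ω) (i := l) (by omega)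
      refine ⟨ω.eraseIdx j, fun b hb => hωL b ((eraseIdx_sublist ω j).subset hb), ?_, hdel⟩
      have := length_eraseIdx_add_one hj
      rw [IsReduced, hdel]
      rw [IsReduced] at hω
      omega
  induction hu using Subgroup.closure_induction_right with
  | one => exact ⟨[], by simp, by simp [IsReduced], rfl⟩
  | mul_right x _ y hy ih =>
    obtain ⟨l, hl, rfl⟩ := hy
    exact extend x l hl ih
  | mul_inv_cancel x _ y hy ih =>
    obtain ⟨l, hl, rfl⟩ := hy
    rw [inv_simple]
    exact extend x l hl ih

theorem exists_mem_simple_eq_of_simple_mem_parab {L : Set B} {i : B} (hi : s i ∈ parab cs L) :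
    ∃ b ∈ L, s b = s i := by
  obtain ⟨ω, hωL, hω, hωi⟩ := exists_reduced_word_of_mem_parab hi
  have hlen : ω.length = 1 := by rw [← hω, hωi, length_simple]
  obtain ⟨b, rfl⟩ := List.length_eq_one_iff.mp hlen
  exact ⟨b, hωL b (mem_singleton_self b), by simpa using hωi⟩

theorem commute_of_mem_parab {A C : Set B}
    (hcomm : ∀ a ∈ A, ∀ c ∈ C, Commute (s a) (s c)) {x y : W}
    (hx : x ∈ parab cs A) (hy : y ∈ parab cs C) : Commute x y := by
  have hle : parab cs A ≤ Subgroup.centralizer (parab cs C) := by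
    rw [parab, parab, Subgroup.centralizer_closure, Subgroup.closure_le]
    rintro _ ⟨a, ha, rfl⟩
    rw [SetLike.mem_coe, Subgroup.mem_centralizer_iff]
    rintro _ ⟨c, hc, rfl⟩
    exact (hcomm a ha c hc).eq.symm
  exact (Subgroup.mem_centralizer_iff.mp (hle hx) y hy).symm

theorem length_mul_wordProd_of_forall_length_le {L : Set B} {u : W}
    (hu : ∀ z ∈ parab cs L, ℓ u ≤ ℓ (u * z)) {ω : List B} (hωL : ∀ b ∈ ω, b ∈ L)
    (hω : cs.IsReduced ω) : ℓ (u * π ω) = ℓ u + ω.length := by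
  induction ω using List.reverseRecOn with
  | nil => simp
  | append_singleton ω i ih =>
    have hω' : cs.IsReduced ω := by simpa using hω.take ω.length
    have hωi : ℓ (π ω * s i) = ω.length + 1 := by
      simpa [IsReduced, wordProd_append] using hω
    have ih' := ih (fun b hb => hωL b (mem_append_left _ hb)) hω'
    have hi : i ∈ L := hωL i (mem_append_right _ (mem_singleton_self i))
    obtain ⟨ωu, hωu, rfl⟩ := cs.exists_isReduced u
    have hlong : ℓ (π ωu * π ω) < ℓ (π ωu * π ω * s i) := by
      by_contra! hle
      have hmem := cs.simple_mem_rightInvSeq (ω := ωu ++ ω) (i := i) (by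
        rw [wordProd_append]
        exact lt_of_le_of_ne hle (cs.length_mul_simple_ne _ i))
      rw [rightInvSeq_append, mem_append, mem_map] at hmem
      rcases hmem with ⟨t, ht, hts⟩ | hmem
      · -- `t` is a reflection of `W_L` that would shorten `u`
        have hωmem : π ω ∈ parab cs L :=
          wordProd_mem_parab fun b hb => hωL b (mem_append_left _ hb)
        have htL : t ∈ parab cs L := by
          rw [MulAut.conj_apply, inv_inv, ← eq_mul_inv_iff_mul_eq, inv_mul_eq_iff_eq_mul] at hts
          rw [hts]
          exact mul_mem hωmem (mul_mem (simple_mem_parab hi) (inv_mem hωmem))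
        have := (cs.isRightInversion_of_mem_rightInvSeq hωu ht).2
        have := hu t htL
        omega
      · have := (cs.isRightInversion_of_mem_rightInvSeq hω' hmem).2
        rw [IsReduced] at hω'
        omega
    rw [wordProd_append, wordProd_singleton, ← mul_assoc, length_append, length_singleton]
    rcases cs.length_mul_simple (π ωu * π ω) i with h | h <;> omega

theorem length_le_length_mul_of_mem_minReps {L : Set B} {w : W} (hw : w ∈ minReps cs L)
    {z : W} (hz : z ∈ parab cs L) : ℓ w ≤ ℓ (w * z) := by
  obtain ⟨z₀, hz₀, hmin⟩ :=
    (measure fun z => ℓ (w * z)).wf.has_min (parab cs L : Set W) ⟨1, one_mem _⟩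
  have hmin' : ∀ z ∈ parab cs L, ℓ (w * z₀) ≤ ℓ (w * z) := fun z hz => not_lt.mp (hmin z hz)
  have hu : ∀ z ∈ parab cs L, ℓ (w * z₀) ≤ ℓ (w * z₀ * z) := fun z hz => by
    simpa [mul_assoc] using hmin' (z₀ * z) (mul_mem hz₀ hz)
  obtain ⟨ω, hωL, hω, hωz⟩ := exists_reduced_word_of_mem_parab (inv_mem hz₀)
  have hsplit : ℓ w = ℓ (w * z₀) + ω.length := by
    rw [← length_mul_wordProd_of_forall_length_le hu hωL hω, hωz, mul_inv_cancel_right]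
  suffices ω = [] by simpa [this, hsplit] using hmin' z hz
  -- otherwise the last letter of `ω` would be a descent of `w` in `L`
  obtain _ | ⟨ω', i, rfl⟩ := ω.eq_nil_or_concat'
  · assumption
  · exfalso
    have hω' : cs.IsReduced ω' := by simpa using hω.take ω'.length
    have hwi : w * z₀ * π ω' = w * s i := by
      rw [wordProd_append, wordProd_singleton] at hωz
      rw [← cs.simple_mul_simple_cancel_right (w := π ω') i, hωz]
      group
    have hlen := length_mul_wordProd_of_forall_length_le hu (fun b hb => hωL b (by simp [hb])) hω'
    rw [hwi] at hlen
    have := hw i (hωL i (by simp))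
    simp only [length_append, length_singleton] at hsplit
    omega

theorem length_mul_of_mem_minReps {L : Set B} {w v : W} (hw : w ∈ minReps cs L)
    (hv : v ∈ parab cs L) : ℓ (w * v) = ℓ w + ℓ v := by
  obtain ⟨ω, hωL, hω, rfl⟩ := exists_reduced_word_of_mem_parab hv
  rw [length_mul_wordProd_of_forall_length_le
    (fun _ hz => length_le_length_mul_of_mem_minReps hw hz) hωL hω, hω]

theorem mem_minReps_of_mem_parab {L L' : Set B} {p : W} (hp : p ∈ parab cs L)
    (hL' : ∀ l ∈ L', s l ∉ parab cs L) : p ∈ minReps cs L' := by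
  intro l hl
  obtain ⟨ω, hωL, -, rfl⟩ := exists_reduced_word_of_mem_parab hp
  by_contra! hle
  obtain ⟨j, -, hdel⟩ := cs.exists_wordProd_eraseIdx_eq_mul_simple
    (lt_of_le_of_ne hle (cs.length_mul_simple_ne _ l))
  have hmem : π ω * s l ∈ parab cs L :=
    hdel ▸ wordProd_mem_parab fun b hb => hωL b ((eraseIdx_sublist ω j).subset hb)
  exact hL' l hl (by simpa using mul_mem (inv_mem hp) hmem)

theorem length_map_le {L : Set B} {f : W → W}
    (hmul : ∀ x ∈ parab cs L, ∀ y ∈ parab cs L, f (x * y) = f x * f y)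
    (hsimple : ∀ i ∈ L, ∃ j, f (s i) = s j) {x : W} (hx : x ∈ parab cs L) : ℓ (f x) ≤ ℓ x := by
  obtain ⟨ω, hωL, hω, rfl⟩ := exists_reduced_word_of_mem_parab hx
  rw [hω]
  clear hω hx
  induction ω with
  | nil =>
    have h1 := hmul 1 (one_mem _) 1 (one_mem _)
    rw [mul_one, left_eq_mul] at h1
    simp [h1]
  | cons i ω ih =>
    have hi : i ∈ L := hωL i (mem_cons_self ..)
    obtain ⟨j, hj⟩ := hsimple i hi
    have hωL' : ∀ b ∈ ω, b ∈ L := fun b hb => hωL b (mem_cons_of_mem _ hb)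
    rw [wordProd_cons, hmul _ (simple_mem_parab hi) _ (wordProd_mem_parab hωL'), hj, length_cons]
    have := cs.length_mul_le (s j) (f (π ω))
    rw [length_simple] at this
    have := ih hωL'
    omega

end CoxeterSystem

namespace GoodSetup

open CoxeterSystem

variable {cs : CoxeterSystem M W} {I J K : Set B} {σ : W → W}

local prefix:100 "s " => cs.simple
local prefix:100 "ℓ " => cs.length

theorem map_one (h : GoodSetup cs I J K σ) : σ 1 = 1 := by
  have h1 := h.mulSigma 1 (one_mem _) 1 (one_mem _)
  rwa [mul_one, left_eq_mul] at h1

theorem exists_map_simple_eq (h : GoodSetup cs I J K σ) {j : B} (hj : j ∈ J) :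
    ∃ i ∈ I, σ (s i) = s j := by
  set J₀ : Set B := {b | ∃ i ∈ I, σ (s i) = s b}
  have hmaps : ∀ x ∈ parab cs I, σ x ∈ parab cs J₀ := by
    have step : ∀ x ∈ parab cs I, σ x ∈ parab cs J₀ → ∀ i ∈ I,
        σ (x * s i) ∈ parab cs J₀ := by
      intro x hx hσx i hi
      obtain ⟨b, -, hb⟩ := h.simpleSigma i hi
      rw [h.mulSigma x hx _ (simple_mem_parab hi), hb]
      exact mul_mem hσx (simple_mem_parab ⟨i, hi, hb⟩)
    intro x hx
    induction hx using Subgroup.closure_induction_right with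
    | one => rw [h.map_one]; exact one_mem _
    | mul_right x hx y hy ih =>
      obtain ⟨i, hi, rfl⟩ := hy
      exact step x hx ih i hi
    | mul_inv_cancel x hx y hy ih =>
      obtain ⟨i, hi, rfl⟩ := hy
      rw [inv_simple]
      exact step x hx ih i hi
  obtain ⟨x, hx, hxj⟩ := h.bijSigma.surjOn (simple_mem_parab hj : s j ∈ parab cs J)
  obtain ⟨b, ⟨i, hi, hib⟩, hbj⟩ :=
    exists_mem_simple_eq_of_simple_mem_parab (hxj ▸ hmaps x hx)
  exact ⟨i, hi, hib.trans hbj⟩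

theorem length_map (h : GoodSetup cs I J K σ) {x : W} (hx : x ∈ parab cs I) :
    ℓ (σ x) = ℓ x := by
  set τ := Function.invFunOn σ (parab cs I : Set W)
  have hinv : Set.InvOn τ σ (parab cs I) (parab cs J) := h.bijSigma.invOn_invFunOn
  have hτJ : Set.MapsTo τ (parab cs J : Set W) (parab cs I) := h.bijSigma.surjOn.mapsTo_invFunOn
  have hτmul : ∀ y ∈ parab cs J, ∀ y' ∈ parab cs J, τ (y * y') = τ y * τ y' := by
    intro y hy y' hy'
    refine h.bijSigma.injOn (hτJ (mul_mem hy hy')) (mul_mem (hτJ hy) (hτJ hy')) ?_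
    rw [h.mulSigma _ (hτJ hy) _ (hτJ hy'), hinv.2 (mul_mem hy hy'), hinv.2 hy, hinv.2 hy']
  have hτsimple : ∀ j ∈ J, ∃ i, τ (s j) = s i := by
    intro j hj
    obtain ⟨i, hi, hij⟩ := h.exists_map_simple_eq hj
    exact ⟨i, by rw [← hij, hinv.1 (simple_mem_parab hi)]⟩
  have hσsimple : ∀ i ∈ I, ∃ j, σ (s i) = s j := fun i hi =>
    (h.simpleSigma i hi).imp fun _ hj => hj.2
  refine le_antisymm (length_map_le h.mulSigma hσsimple hx) ?_
  calc ℓ x = ℓ (τ (σ x)) := by rw [hinv.1 hx]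
    _ ≤ ℓ (σ x) := length_map_le hτmul hτsimple (h.bijSigma.mapsTo hx)

theorem simple_notMem_parab_I (h : GoodSetup cs I J K σ) {l : B} (hl : l ∈ J ∪ K) :
    s l ∉ parab cs I := by
  intro hlI
  have hone : s l = 1 := by
    rcases hl with hlJ | hlK
    · exact (h.directProd _ hlI _ (inv_mem (simple_mem_parab hlJ)) 1 (one_mem _)
        (by group)).1
    · exact (h.directProd _ hlI 1 (one_mem _) _ (inv_mem (simple_mem_parab hlK))
        (by group)).1
  simpa [hone] using cs.length_simple l

theorem simple_notMem_parab_J (h : GoodSetup cs I J K σ) {l : B} (hl : l ∈ K) :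
    s l ∉ parab cs J := by
  intro hlJ
  have hone : s l = 1 :=
    (h.directProd 1 (one_mem _) _ hlJ _ (inv_mem (simple_mem_parab hl)) (by group)).2.1
  simpa [hone] using cs.length_simple l

theorem length_mul_mul_of_mem_parab (h : GoodSetup cs I J K σ) {x y z : W} (hx : x ∈ parab cs I)
    (hy : y ∈ parab cs J) (hz : z ∈ parab cs K) : ℓ (x * y * z) = ℓ x + ℓ y + ℓ z := by
  have hyz : y * z ∈ parab cs (J ∪ K) :=
    mul_mem (parab_mono Set.subset_union_left hy) (parab_mono Set.subset_union_right hz)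
  rw [mul_assoc,
    length_mul_of_mem_minReps (mem_minReps_of_mem_parab hx fun _ => h.simple_notMem_parab_I)
      hyz,
    length_mul_of_mem_minReps (mem_minReps_of_mem_parab hy fun _ => h.simple_notMem_parab_J)
      hz, add_assoc]

theorem length_coset_element (h : GoodSetup cs I J K σ) {w₁ w₂ x a : W}
    (hw₁ : w₁ ∈ minReps cs (I ∪ J ∪ K)) (hw₂ : w₂ ∈ parab cs I) (hx : x ∈ parab cs I)
    (ha : a ∈ parab cs K) :
    ℓ (w₁ * w₂ * a * (x * σ x)) = ℓ w₁ + ℓ (w₂ * x) + ℓ x + ℓ a := by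
  have hσx := h.bijSigma.mapsTo hx
  have hcomm : Commute a (x * σ x) :=
    ((commute_of_mem_parab h.commIK hx ha).mul_left (commute_of_mem_parab h.commJK hσx ha)).symm
  have hprod : w₁ * w₂ * a * (x * σ x) = w₁ * (w₂ * x * σ x * a) := by
    rw [mul_assoc _ a, hcomm.eq]
    group
  have hIJK : w₂ * x * σ x * a ∈ parab cs (I ∪ J ∪ K) :=
    mul_mem (mul_mem (parab_mono (fun _ hb => Or.inl (Or.inl hb)) (mul_mem hw₂ hx))
      (parab_mono (fun _ hb => Or.inl (Or.inr hb)) hσx)) (parab_mono (fun _ hb => Or.inr hb) ha)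
  rw [hprod, length_mul_of_mem_minReps hw₁ hIJK,
    h.length_mul_mul_of_mem_parab (mul_mem hw₂ hx) hσx ha, h.length_map hx]
  ring

end GoodSetup

theorem statement_6_general (cs : CoxeterSystem M W) (I J K : Set B) (σ : W → W)
    (h : GoodSetup cs I J K σ) (w w₁ w₂ : W)
    (hw₁ : w₁ ∈ minReps cs (I ∪ J ∪ K))
    (hw₂ : w₂ ∈ parab cs I) (hd : w = w₁ * w₂) :
    MinC cs I K σ w =
      {u : W | ∃ x ∈ parab cs I, u = w * (x * σ x) ∧
        cs.length (w₂ * x) + cs.length x⁻¹ = cs.length w₂} := by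
  subst hd
  have hlen_w : cs.length (w₁ * w₂) = cs.length w₁ + cs.length w₂ :=
    CoxeterSystem.length_mul_of_mem_minReps hw₁
      (CoxeterSystem.parab_mono (fun b hb => Or.inl (Or.inl hb)) hw₂)
  ext u
  simp only [MinC, inCoset, Set.mem_ofPred_eq, cs.length_inv]
  constructor
  · rintro ⟨⟨a, ha, x, hx, rfl⟩, hlen⟩
    rw [h.length_coset_element hw₁ hw₂ hx ha, hlen_w] at hlen
    have htri : cs.length w₂ ≤ cs.length (w₂ * x) + cs.length x := by
      simpa using cs.length_mul_le (w₂ * x) x⁻¹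
    obtain rfl : a = 1 := cs.length_eq_zero_iff.mp (by omega)
    exact ⟨x, hx, by rw [mul_one], by omega⟩
  · rintro ⟨x, hx, rfl, hx_len⟩
    refine ⟨⟨1, one_mem _, x, hx, by rw [mul_one]⟩, ?_⟩
    have := h.length_coset_element hw₁ hw₂ hx (one_mem _)
    rw [mul_one, cs.length_one] at this
    omega

theorem statement_6 (cs : CoxeterSystem M W) (I J K : Set B) (σ : W → W)
    (h : GoodSetup cs I J K σ) (w w₁ w₂ : W)
    (hw : w ∈ minReps cs (J ∪ K)) (hw₁ : w₁ ∈ minReps cs (I ∪ J ∪ K))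
    (hw₂ : w₂ ∈ parab cs I) (hd : w = w₁ * w₂) :
    MinC cs I K σ w =
      {u : W | ∃ x ∈ parab cs I, u = w * (x * σ x) ∧
        cs.length (w₂ * x) + cs.length x⁻¹ = cs.length w₂} :=
  statement_6_general cs I J K σ h w w₁ w₂ hw₁ hw₂ hd

end BruhatSetup
end
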